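/- arXiv:1212.2192 — 3 statements merged into one kernel-verified Lean document; each statement's English description precedes it below -/
import Mathlib

section
/- Let A be a discrete valuation ring with uniformizer π, residue field k, and fraction field K; let M and M′ be free A-modules of the same finite rank n, and let L : M → M′ be an injective A-linear map whose extension to K-vector spaces is an isomorphism. For r ≥ 0 define E^r ⊆ M/πM as the image of { m ∈ M : L(m) ∈ π^r M′ } under the quotient map M → M/πM. Then (E^r) is a decreasing filtration with E⁰ = M/πM, E^R = 0 for R sufficiently large, and the valuation of det L satisfies ord_π(det L) = Σ_{r ≥ 1} dim_k E^r. -/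
theorem jantzen_aux_mem_smul_top {R : Type*} [CommRing R] {M : Type*} [AddCommGroup M]
    [Module R M] {ι : Type*} [Fintype ι] (b : Module.Basis ι R M) (J : Ideal R) (m : M) :
    m ∈ (J • ⊤ : Submodule R M) ↔ ∀ i, b.repr m i ∈ J := by
  constructor
  · intro hm
    refine Submodule.smul_induction_on hm ?_ ?_
    · intro r hr x _ i
      rw [map_smul, Finsupp.smul_apply, smul_eq_mul]
      exact J.mul_mem_right _ hr
    · intro x y hx hy i
      rw [map_add, Finsupp.add_apply]
      exact J.add_mem (hx i) (hy i)
  · intro h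
    rw [← b.sum_repr m]
    exact Submodule.sum_mem _ fun i _ => Submodule.smul_mem_smul (h i) Submodule.mem_top





/-- Jantzen's filtration lemma.  Let `A` be a discrete valuation ring with
uniformizer `π`, residue field `k = A/(π)` and fraction field `K`; let `M`, `M′`
be free `A`-modules of the same finite rank `n` and `L : M → M′` an injective
`A`-linear map whose extension to `K`-vector spaces is an isomorphism.  For
`r ≥ 0` let `E^r ⊆ M/πM` be the image of `{m : L(m) ∈ π^r M′}` under the
quotient map.  Then `(E^r)` is a decreasing filtration with `E⁰ = M/πM` and
`E^R = 0` for `R` large, and `ord_π(det L) = Σ_{r ≥ 1} dim_k E^r`. -/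
theorem jantzen_filtration_lemma
    {A : Type*} [CommRing A] [IsDomain A] [IsDiscreteValuationRing A]
    (π : A) (hπ : Irreducible π)
    {M M' : Type*} [AddCommGroup M] [Module A M] [AddCommGroup M'] [Module A M']
    {n : ℕ} (bM : Module.Basis (Fin n) A M) (bM' : Module.Basis (Fin n) A M')
    (L : M →ₗ[A] M') (hL : Function.Injective L)
    (hK : IsUnit ((LinearMap.toMatrix bM bM' L).map
      (algebraMap A (FractionRing A))))
    (E : ℕ → Submodule (A ⧸ Ideal.span {π})
      (M ⧸ (Ideal.span {π} • ⊤ : Submodule A M)))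
    (hE : ∀ r : ℕ, (E r : Set (M ⧸ (Ideal.span {π} • ⊤ : Submodule A M))) =
      (Submodule.mkQ (Ideal.span {π} • ⊤ : Submodule A M)) ''
        {m : M | L m ∈ (Ideal.span {π} ^ r • ⊤ : Submodule A M')}) :
    (∀ r : ℕ, E (r + 1) ≤ E r) ∧
    E 0 = ⊤ ∧
    (∃ R₀ : ℕ, ∀ r ≥ R₀, E r = ⊥) ∧
    (∀ R₀ : ℕ, (∀ r > R₀, E r = ⊥) →
      multiplicity π (LinearMap.toMatrix bM bM' L).det =
        ∑ r ∈ Finset.Icc 1 R₀,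
          Module.finrank (A ⧸ Ideal.span {π}) (E r)) := by
  classical
  obtain ⟨m0, snf⟩ := (LinearMap.range L).smithNormalForm bM'
  set eM : M ≃ₗ[A] LinearMap.range L := LinearEquiv.ofInjective L hL with heM
  have hm0 : n = m0 := by
    have h := (snf.bN.map eM.symm).indexEquiv bM
    simpa using (Fintype.card_congr h).symm
  subst hm0
  set e : Module.Basis (Fin n) A M := snf.bN.map eM.symm with he
  set c : Module.Basis (Fin n) A M' := snf.bM with hc
  have hLe : ∀ i, L (e i) = snf.a i • c (snf.f i) := by
    intro i
    have h1 : ((snf.bN i : M') : M') = snf.a i • c (snf.f i) := snf.snf i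
    have h2 : L (e i) = (snf.bN i : M') := by
      rw [he, Module.Basis.map_apply]
      have h3 : L (eM.symm (snf.bN i))
          = ((eM (eM.symm (snf.bN i)) : LinearMap.range L) : M') := rfl
      rw [h3, eM.apply_symm_apply]
    rw [h2, h1]
  have ha : ∀ i, snf.a i ≠ 0 := by
    intro i h
    apply snf.bN.ne_zero i
    have h1 := snf.snf i
    rw [h, zero_smul] at h1
    exact Subtype.ext h1
  choose d u hdu using fun i => IsDiscreteValuationRing.eq_unit_mul_pow_irreducible (ha i) hπ
  have hfbij : Function.Bijective snf.f := Finite.injective_iff_bijective.mp snf.f.injective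
  set g : Fin n ≃ Fin n := Equiv.ofBijective snf.f hfbij with hg
  set σ : Equiv.Perm (Fin n) := g.symm with hσ
  have hmat : LinearMap.toMatrix e c L = σ.permMatrix A * Matrix.diagonal snf.a := by
    ext i j
    rw [LinearMap.toMatrix_apply, hLe j, map_smul]
    simp only [Finsupp.smul_apply, Module.Basis.repr_self, smul_eq_mul, Finsupp.single_apply,
      Matrix.mul_apply, Equiv.Perm.permMatrix, PEquiv.toMatrix_apply, Equiv.toPEquiv_apply,
      Option.mem_def, Option.some_inj, Matrix.diagonal_apply]
    rw [Finset.sum_eq_single (σ i)]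
    · by_cases hij : snf.f j = i
      · have hthis : σ i = j := g.symm_apply_eq.mpr hij.symm
        rw [if_pos hij, if_pos rfl, if_pos hthis, hthis, mul_one, one_mul]
      · have hthis : ¬ (σ i = j) := fun hcon => hij (by rw [← hcon]; exact g.apply_symm_apply i)
        rw [if_neg hij, if_neg hthis, if_pos rfl, mul_zero, one_mul]
    · intro b _ hb
      rw [if_neg (fun h => hb h.symm), zero_mul]
    · simp
  have hdetmid : (LinearMap.toMatrix e c L).det
      = ((Equiv.Perm.sign σ : ℤ) : A) * ((∏ i, (u i : A)) * π ^ (∑ i, d i)) := by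
    rw [hmat, Matrix.det_mul, Matrix.det_permutation, Matrix.det_diagonal]
    congr 1
    rw [Finset.prod_congr rfl (fun i _ => hdu i), Finset.prod_mul_distrib,
      Finset.prod_pow_eq_pow_sum]
  set D : ℕ := ∑ i, d i with hD
  have hchg : (Module.Basis.toMatrix bM' c) * (LinearMap.toMatrix e c L) * (Module.Basis.toMatrix e bM)
      = LinearMap.toMatrix bM bM' L :=
    basis_toMatrix_mul_linearMap_toMatrix_mul_basis_toMatrix bM e bM' c L
  have hunit1 : IsUnit (Module.Basis.toMatrix bM' c).det := by
    haveI := Module.Basis.invertibleToMatrix bM' c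
    exact Matrix.isUnit_det_of_invertible _
  have hunit2 : IsUnit (Module.Basis.toMatrix e bM).det := by
    haveI := Module.Basis.invertibleToMatrix e bM
    exact Matrix.isUnit_det_of_invertible _
  have hsign : IsUnit ((Equiv.Perm.sign σ : ℤ) : A) := by
    rcases Int.units_eq_one_or (Equiv.Perm.sign σ) with h | h <;> rw [h] <;> simp
  have hprod : IsUnit (∏ i, (u i : A)) := by
    simpa using (∏ i, u i).isUnit
  obtain ⟨v, hv, hfac⟩ : ∃ v, IsUnit v ∧ (LinearMap.toMatrix bM bM' L).det = v * π ^ D := by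
    refine ⟨(Module.Basis.toMatrix bM' c).det * (((Equiv.Perm.sign σ : ℤ) : A) * ∏ i, (u i : A))
        * (Module.Basis.toMatrix e bM).det, (hunit1.mul (hsign.mul hprod)).mul hunit2, ?_⟩
    rw [← hchg, Matrix.det_mul, Matrix.det_mul, hdetmid]
    ring
  have hmult : multiplicity π (LinearMap.toMatrix bM bM' L).det = D := by
    rw [hfac]
    refine multiplicity_eq_of_dvd_of_not_dvd ⟨v, mul_comm v (π ^ D)⟩ ?_
    rintro ⟨t, ht⟩
    have hπ0 : π ≠ 0 := hπ.ne_zero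
    have hvt : v = π * t := by
      have h1 : π ^ D * v = π ^ D * (π * t) := by
        rw [mul_comm (π ^ D) v, ht, pow_succ]
        ring
      exact mul_left_cancel₀ (pow_ne_zero D hπ0) h1
    exact hπ.not_isUnit (isUnit_of_mul_isUnit_left (hvt ▸ hv))
  haveI hImax : (Ideal.span {π}).IsMaximal :=
    PrincipalIdealRing.isMaximal_of_irreducible hπ
  letI : Field (A ⧸ Ideal.span {π}) := Ideal.Quotient.field _
  haveI hTow : IsScalarTower A (A ⧸ Ideal.span {π})
      (M ⧸ (Ideal.span {π} • ⊤ : Submodule A M)) :=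
    Module.IsTorsionBySet.isScalarTower _
  let q : M →ₗ[A] (Fin n → A ⧸ Ideal.span {π}) :=
    LinearMap.pi fun i => (Algebra.linearMap A (A ⧸ Ideal.span {π})).comp (e.coord i)
  have hq : ∀ (mm : M) (i : Fin n),
      q mm i = Ideal.Quotient.mk (Ideal.span {π}) (e.repr mm i) := fun _ _ => rfl
  have hker : LinearMap.ker q = (Ideal.span {π} • ⊤ : Submodule A M) := by
    ext mm
    rw [LinearMap.mem_ker, jantzen_aux_mem_smul_top e]
    constructor
    · intro h i
      have h2 := congrFun h i
      rw [hq] at h2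
      exact Ideal.Quotient.eq_zero_iff_mem.mp h2
    · intro h
      funext i
      rw [hq]
      exact Ideal.Quotient.eq_zero_iff_mem.mpr (h i)
  let qbar := Submodule.liftQ (Ideal.span {π} • ⊤ : Submodule A M) q hker.ge
  have hqbar : ∀ mm : M, qbar (Submodule.Quotient.mk mm) = q mm := fun mm => rfl
  have hqsurj : Function.Surjective q := by
    intro x
    choose y hy using fun i => Ideal.Quotient.mk_surjective (x i)
    refine ⟨∑ i, y i • e i, ?_⟩
    funext i
    rw [hq, Module.Basis.repr_sum_self]
    exact hy i
  have hbij : Function.Bijective qbar := by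
    constructor
    · rw [← LinearMap.ker_eq_bot]
      exact Submodule.ker_liftQ_eq_bot _ _ _ hker.le
    · intro x
      obtain ⟨mm, hm⟩ := hqsurj x
      exact ⟨Submodule.Quotient.mk mm, by rw [hqbar, hm]⟩
  let ψ : (M ⧸ (Ideal.span {π} • ⊤ : Submodule A M))
      ≃ₗ[A ⧸ Ideal.span {π}] (Fin n → A ⧸ Ideal.span {π}) :=
    (LinearEquiv.ofBijective qbar hbij).extendScalarsOfSurjective Ideal.Quotient.mk_surjective
  have hψ : ∀ mm : M, ψ (Submodule.Quotient.mk mm) = q mm := fun mm => rfl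
  have hrepr : ∀ (i : Fin n) (mm : M),
      c.repr (L mm) (snf.f i) = snf.a i * e.repr mm i := by
    intro i mm
    have h1 : c.repr (L mm) (snf.f i)
        = ∑ j, e.repr mm j * (snf.a j * (Finsupp.single (snf.f j) (1:A)) (snf.f i)) := by
      conv_lhs => rw [← e.sum_repr mm]
      rw [map_sum, map_sum, Finsupp.finset_sum_apply]
      refine Finset.sum_congr rfl fun j _ => ?_
      rw [map_smul, hLe j, map_smul, map_smul, Module.Basis.repr_self]
      by_cases hji : snf.f j = snf.f i <;> simp [Finsupp.single_apply, hji]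
    rw [h1, Finset.sum_eq_single i]
    · rw [Finsupp.single_apply, if_pos rfl, mul_one, mul_comm]
    · intro b _ hb
      rw [Finsupp.single_apply, if_neg (fun h => hb (snf.f.injective h)), mul_zero, mul_zero]
    · simp
  let W : ℕ → Submodule (A ⧸ Ideal.span {π}) (Fin n → A ⧸ Ideal.span {π}) := fun r =>
    { carrier := {x | ∀ i, d i < r → x i = 0}
      add_mem' := fun {x y} hx hy i hi => by
        simp only [Pi.add_apply, hx i hi, hy i hi, add_zero]
      zero_mem' := fun i _ => rfl
      smul_mem' := fun s x hx i hi => by simp only [Pi.smul_apply, hx i hi, smul_zero] }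
  have hsetchar : ∀ (r : ℕ) (mm : M),
      (L mm ∈ (Ideal.span {π} ^ r • ⊤ : Submodule A M')) ↔
        ∀ i, π ^ r ∣ e.repr mm i * snf.a i := by
    intro r mm
    rw [jantzen_aux_mem_smul_top c]
    constructor
    · intro h i
      have h2 := h (snf.f i)
      rw [hrepr i mm, Ideal.span_singleton_pow, Ideal.mem_span_singleton] at h2
      rwa [mul_comm]
    · intro h j
      obtain ⟨i, rfl⟩ := hfbij.2 j
      rw [hrepr i mm, Ideal.span_singleton_pow, Ideal.mem_span_singleton, mul_comm]
      exact h i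
  have hmap : ∀ r, (E r).map (ψ : (M ⧸ (Ideal.span {π} • ⊤ : Submodule A M)) →ₗ[A ⧸ Ideal.span {π}]
      (Fin n → A ⧸ Ideal.span {π})) = W r := by
    intro r
    apply le_antisymm
    · rintro x ⟨y, hy, rfl⟩
      have hy' : y ∈ (E r : Set _) := hy
      rw [hE r] at hy'
      obtain ⟨mm, hmm, rfl⟩ := hy'
      intro i hi
      show ψ (Submodule.Quotient.mk mm) i = 0
      rw [hψ mm, hq mm i, Ideal.Quotient.eq_zero_iff_mem, Ideal.mem_span_singleton]
      have h1 := (hsetchar r mm).mp hmm i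
      rw [hdu i] at h1
      have h2 : π ^ (d i) * (π * 1) ∣ π ^ (d i) * (e.repr mm i * u i) := by
        calc π ^ d i * (π * 1) = π ^ (d i + 1) := by ring
        _ ∣ π ^ r := pow_dvd_pow π hi
        _ ∣ e.repr mm i * (u i * π ^ d i) := h1
        _ = π ^ d i * (e.repr mm i * u i) := by ring
      have h3 : π ∣ e.repr mm i * u i := by
        have h4 := (mul_dvd_mul_iff_left (pow_ne_zero (d i) hπ.ne_zero)).mp h2
        simpa using h4
      exact Units.dvd_mul_right.mp h3
    · intro x hx
      choose y hy using fun i => Ideal.Quotient.mk_surjective (x i)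
      set z : Fin n → A := fun i => if d i < r then 0 else y i with hz
      have hzx : ∀ i, Ideal.Quotient.mk (Ideal.span {π}) (z i) = x i := by
        intro i
        by_cases hi : d i < r
        · rw [hz]; simp only [if_pos hi, map_zero]; exact (hx i hi).symm
        · rw [hz]; simp only [if_neg hi]; exact hy i
      refine ⟨Submodule.Quotient.mk (∑ i, z i • e i), ?_, ?_⟩
      · show _ ∈ E r
        have hmem : (∑ i, z i • e i) ∈
            {m : M | L m ∈ (Ideal.span {π} ^ r • ⊤ : Submodule A M')} := by
          rw [Set.mem_setOf_eq, hsetchar r]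
          intro i
          rw [Module.Basis.repr_sum_self]
          by_cases hi : d i < r
          · rw [hz]; simp only [if_pos hi, zero_mul]; exact dvd_zero _
          · rw [hdu i]
            exact (pow_dvd_pow π (not_lt.mp hi)).trans ⟨z i * u i, by ring⟩
        have hset : Submodule.Quotient.mk (p := (Ideal.span {π} • ⊤ : Submodule A M))
            (∑ i, z i • e i) ∈ (E r : Set (M ⧸ (Ideal.span {π} • ⊤ : Submodule A M))) := by
          rw [hE r]
          exact ⟨_, hmem, rfl⟩
        exact hset
      · show ψ (Submodule.Quotient.mk (∑ i, z i • e i)) = x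
        rw [hψ]
        funext i
        rw [hq, Module.Basis.repr_sum_self]
        exact hzx i
  have hdim : ∀ r, Module.finrank (A ⧸ Ideal.span {π}) (E r)
      = (Finset.univ.filter fun i => r ≤ d i).card := by
    intro r
    rw [← LinearEquiv.finrank_map_eq ψ (E r), hmap r]
    let eqv : (W r) ≃ₗ[A ⧸ Ideal.span {π}] ({i : Fin n // r ≤ d i} → A ⧸ Ideal.span {π}) :=
      { toFun := fun x i => x.1 i.1
        map_add' := fun x y => rfl
        map_smul' := fun s x => rfl
        invFun := fun x => ⟨fun i => if h : r ≤ d i then x ⟨i, h⟩ else 0,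
          fun i hi => by
            show (if h : r ≤ d i then x ⟨i, h⟩ else 0) = 0
            rw [dif_neg (not_le.mpr hi)]⟩
        left_inv := fun x => by
          apply Subtype.ext
          funext i
          show (if h : r ≤ d i then x.1 i else 0) = x.1 i
          by_cases h : r ≤ d i
          · rw [dif_pos h]
          · rw [dif_neg h]
            exact (x.2 i (not_le.mp h)).symm
        right_inv := fun x => by
          funext i
          show (if h : r ≤ d i.1 then x ⟨i.1, h⟩ else 0) = x i
          rw [dif_pos i.2] }
    rw [eqv.finrank_eq, Module.finrank_pi]
    simp [Fintype.card_subtype]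
  refine ⟨?_, ?_, ?_, ?_⟩
  · intro r x hx
    have hsub : {m : M | L m ∈ (Ideal.span {π} ^ (r+1) • ⊤ : Submodule A M')}
        ⊆ {m : M | L m ∈ (Ideal.span {π} ^ r • ⊤ : Submodule A M')} := fun mm hmm =>
      Submodule.smul_mono_left (Ideal.pow_le_pow_right (Nat.le_succ r)) hmm
    have hx' : x ∈ (E (r+1) : Set _) := hx
    rw [hE (r+1)] at hx'
    show x ∈ (E r : Set _)
    rw [hE r]
    exact Set.image_mono hsub hx'
  · rw [Submodule.eq_top_iff']
    intro x
    obtain ⟨mm, rfl⟩ := Submodule.Quotient.mk_surjective _ x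
    have hset : Submodule.Quotient.mk (p := (Ideal.span {π} • ⊤ : Submodule A M)) mm
        ∈ (E 0 : Set (M ⧸ (Ideal.span {π} • ⊤ : Submodule A M))) := by
      rw [hE 0]
      refine ⟨mm, ?_, rfl⟩
      show L mm ∈ (Ideal.span {π} ^ 0 • ⊤ : Submodule A M')
      rw [pow_zero, Ideal.one_eq_top, Submodule.top_smul]
      exact Submodule.mem_top
    exact hset
  · refine ⟨D + 1, fun r hr => ?_⟩
    have hWbot : W r = ⊥ := by
      rw [eq_bot_iff]
      intro x hx
      rw [Submodule.mem_bot]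
      funext i
      refine hx i ?_
      have hdD : d i ≤ D := Finset.single_le_sum (f := d) (fun _ _ => Nat.zero_le _)
        (Finset.mem_univ i)
      omega
    have hm2 := hmap r
    rw [hWbot, ← Submodule.map_bot (ψ : (M ⧸ (Ideal.span {π} • ⊤ : Submodule A M))
      →ₗ[A ⧸ Ideal.span {π}] (Fin n → A ⧸ Ideal.span {π}))] at hm2
    exact Submodule.map_injective_of_injective ψ.injective hm2
  · intro R₀ hR
    have hdle : ∀ i, d i ≤ R₀ := by
      intro i
      by_contra hcon
      push_neg at hcon
      have hbot := hR (d i) hcon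
      have hd2 := hdim (d i)
      rw [hbot, finrank_bot] at hd2
      have hpos : 0 < (Finset.univ.filter fun j => d i ≤ d j).card :=
        Finset.card_pos.mpr ⟨i, by simp⟩
      omega
    rw [hmult]
    rw [Finset.sum_congr rfl (fun r _ => hdim r)]
    rw [Finset.sum_congr rfl (fun r _ => Finset.card_filter _ _)]
    rw [Finset.sum_comm]
    rw [hD]
    refine Finset.sum_congr rfl fun i _ => ?_
    rw [← Finset.card_filter]
    have hIcc : (Finset.Icc 1 R₀).filter (fun r => r ≤ d i) = Finset.Icc 1 (d i) := by
      have hdi := hdle i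
      ext r
      simp only [Finset.mem_filter, Finset.mem_Icc]
      omega
    rw [hIcc, Nat.card_Icc]
    omega
end

section
/- Let ⟨·,·⟩ be a nondegenerate Hermitian form on a finite-dimensional complex vector space M, let S be a subspace, and set R = S ∩ S^⊥. Then: (1) R is the radical of the restriction of the form to S + S^⊥, so the form descends to a nondegenerate Hermitian form on (S + S^⊥)/R, and (S + S^⊥)/R decomposes as the orthogonal direct sum of S/R and S^⊥/R; (2) the signature (p, q) of the form on M satisfies p = p(S/R) + p(S^⊥/R) + dim R and q = q(S/R) + q(S^⊥/R) + dim R, where (p(·), q(·)) denote the signatures of the induced nondegenerate forms on S/R and S^⊥/R. -/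
/-- The orthogonal complement of a subspace `N` with respect to a sesquilinear form
`B` (linear in the first variable): `N^⊥ = { m : ∀ n ∈ N, B m n = 0 }`. -/
def sesqPerp {M : Type*} [AddCommGroup M] [Module ℂ M]
    (B : M →ₗ[ℂ] M →ₛₗ[starRingEnd ℂ] ℂ) (N : Submodule ℂ M) : Submodule ℂ M where
  carrier := {m | ∀ n ∈ N, B m n = 0}
  add_mem' := by
    intro a b ha hb n hn
    simp [ha n hn, hb n hn]
  zero_mem' := by intro n hn; simp
  smul_mem' := by
    intro c a ha n hn
    simp [ha n hn]

/-- The set of dimensions of subspaces of `W` on which the Hermitian form `B` is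
positive definite. -/
def posDefDims {M : Type*} [AddCommGroup M] [Module ℂ M]
    (B : M →ₗ[ℂ] M →ₛₗ[starRingEnd ℂ] ℂ) (W : Submodule ℂ M) : Set ℕ :=
  {d | ∃ P : Submodule ℂ M, P ≤ W ∧
    (∀ x ∈ P, x ≠ 0 → 0 < (B x x).re ∧ (B x x).im = 0) ∧ Module.finrank ℂ P = d}

/-- The set of dimensions of subspaces of `W` on which the Hermitian form `B` is
negative definite. -/
def negDefDims {M : Type*} [AddCommGroup M] [Module ℂ M]
    (B : M →ₗ[ℂ] M →ₛₗ[starRingEnd ℂ] ℂ) (W : Submodule ℂ M) : Set ℕ :=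
  {d | ∃ P : Submodule ℂ M, P ≤ W ∧
    (∀ x ∈ P, x ≠ 0 → (B x x).re < 0 ∧ (B x x).im = 0) ∧ Module.finrank ℂ P = d}

open Module

namespace SigAux
variable {M : Type*} [AddCommGroup M] [Module ℂ M]
variable {B : M →ₗ[ℂ] M →ₛₗ[starRingEnd ℂ] ℂ}

lemma mem_sesqPerp {N : Submodule ℂ M} {m : M} : m ∈ sesqPerp B N ↔ ∀ n ∈ N, B m n = 0 :=
  Iff.rfl

variable (hherm : ∀ v w, B v w = (starRingEnd ℂ) (B w v))
include hherm

lemma im_diag (x : M) : (B x x).im = 0 := by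
  have h := congrArg Complex.im (hherm x x)
  simp only [Complex.conj_im] at h
  linarith

lemma ortho_symm {x y : M} (h : B x y = 0) : B y x = 0 := by
  rw [hherm y x, h, map_zero]

omit hherm

/-- the linear functional `x ↦ B x v` -/
def phiV (B : M →ₗ[ℂ] M →ₛₗ[starRingEnd ℂ] ℂ) (v : M) : M →ₗ[ℂ] ℂ where
  toFun x := B x v
  map_add' x y := by simp
  map_smul' c x := by simp

@[simp] lemma phiV_apply (v x : M) : phiV B v x = B x v := rfl

/-- the full signature package for the restriction of `B` to `W` -/
def SigTriple (B : M →ₗ[ℂ] M →ₛₗ[starRingEnd ℂ] ℂ) (W : Submodule ℂ M) : Prop :=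
  ∃ p q, IsGreatest (posDefDims B W) p ∧ IsGreatest (negDefDims B W) q ∧
    p + q + finrank ℂ (W ⊓ sesqPerp B W : Submodule ℂ M) = finrank ℂ W

include hherm in
lemma hermNeg : ∀ v w, (-B) v w = (starRingEnd ℂ) ((-B) w v) := by
  intro v w
  simp [LinearMap.neg_apply, hherm v w]

lemma sesqPerp_neg (N : Submodule ℂ M) : sesqPerp (-B) N = sesqPerp B N := by
  ext x
  simp [mem_sesqPerp, LinearMap.neg_apply, neg_eq_zero]

lemma posDefDims_neg (W : Submodule ℂ M) : posDefDims (-B) W = negDefDims B W := by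
  ext d
  unfold posDefDims negDefDims
  simp [LinearMap.neg_apply, neg_pos, neg_eq_zero]

lemma negDefDims_neg (W : Submodule ℂ M) : negDefDims (-B) W = posDefDims B W := by
  ext d
  unfold posDefDims negDefDims
  simp [LinearMap.neg_apply, neg_eq_zero, Left.neg_neg_iff]

lemma sigTriple_neg {W : Submodule ℂ M} (h : SigTriple B W) : SigTriple (-B) W := by
  obtain ⟨p, q, hp, hq, hsum⟩ := h
  exact ⟨q, p, by rwa [posDefDims_neg], by rwa [negDefDims_neg], by
    rwa [sesqPerp_neg, Nat.add_comm q p]⟩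

include hherm in
lemma posdef_sup {A A' : Submodule ℂ M}
    (hA : ∀ x ∈ A, x ≠ 0 → 0 < (B x x).re)
    (hA' : ∀ x ∈ A', x ≠ 0 → 0 < (B x x).re)
    (horth : ∀ a ∈ A, ∀ b ∈ A', B a b = 0) :
    ∀ x ∈ A ⊔ A', x ≠ 0 → 0 < (B x x).re := by
  intro x hx hne
  obtain ⟨a, ha, b, hb, rfl⟩ := Submodule.mem_sup.1 hx
  have hab : B a b = 0 := horth a ha b hb
  have hba : B b a = 0 := ortho_symm hherm hab
  have hexp : B (a + b) (a + b) = B a a + B b b := by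
    simp [map_add, LinearMap.add_apply, hab, hba]
  rw [hexp, Complex.add_re]
  rcases eq_or_ne a 0 with rfl | hane
  · have hbne : b ≠ 0 := by simpa using hne
    have := hA' b hb hbne
    simpa using this
  · have h1 := hA a ha hane
    have h2 : 0 ≤ (B b b).re := by
      rcases eq_or_ne b 0 with rfl | hbne
      · simp
      · exact le_of_lt (hA' b hb hbne)
    linarith

lemma posdef_span_singleton {v : M} (hpos : 0 < (B v v).re) :
    ∀ x ∈ (ℂ ∙ v), x ≠ 0 → 0 < (B x x).re := by
  intro x hx hne
  obtain ⟨c, rfl⟩ := Submodule.mem_span_singleton.1 hx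
  have hcne : c ≠ 0 := by rintro rfl; simp at hne
  have hexp : B (c • v) (c • v) = (Complex.normSq c : ℂ) * B v v := by
    rw [show B (c • v) = c • B v from B.map_smul c v, LinearMap.smul_apply,
      LinearMap.map_smulₛₗ, smul_eq_mul, smul_eq_mul, ← mul_assoc, Complex.mul_conj]
  rw [hexp]
  have : ((Complex.normSq c : ℂ) * B v v).re = Complex.normSq c * (B v v).re := by
    simp [Complex.mul_re]
  rw [this]
  exact mul_pos (Complex.normSq_pos.2 hcne) hpos

lemma sigTriple_of_isotropic (W : Submodule ℂ M) [FiniteDimensional ℂ M]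
    (h : ∀ v ∈ W, B v v = 0) : SigTriple B W := by
  have hsum2 : ∀ x ∈ W, ∀ y ∈ W, B x y + B y x = 0 := by
    intro x hx y hy
    have h1 := h _ (W.add_mem hx hy)
    simp only [map_add, LinearMap.add_apply] at h1
    linear_combination h1 - h x hx - h y hy
  have hall : ∀ x ∈ W, ∀ y ∈ W, B x y = 0 := by
    intro x hx y hy
    have e1 := hsum2 x hx y hy
    have e2 := hsum2 x hx (Complex.I • y) (W.smul_mem _ hy)
    simp only [map_smul, LinearMap.smul_apply, LinearMap.map_smulₛₗ, smul_eq_mul,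
      Complex.conj_I] at e2
    linear_combination e1 / 2 + Complex.I / 2 * e2 + ((B x y - B y x) / 2) * Complex.I_mul_I
  have hrad : W ⊓ sesqPerp B W = W := by
    rw [inf_eq_left]
    intro x hx
    exact fun n hn => hall x hx n hn
  have hzero : ∀ P : Submodule ℂ M, P ≤ W →
      (∀ x ∈ P, x ≠ 0 → 0 < (B x x).re ∨ (B x x).re < 0) → P = ⊥ := by
    intro P hPW hP
    rw [Submodule.eq_bot_iff]
    intro x hx
    by_contra hne
    have := hP x hx hne
    rw [h x (hPW hx)] at this
    simp at this
  refine ⟨0, 0, ⟨⟨⊥, bot_le, by simp, finrank_bot ℂ M⟩, ?_⟩,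
    ⟨⟨⊥, bot_le, by simp, finrank_bot ℂ M⟩, ?_⟩, by rw [hrad]; simp⟩
  · rintro d ⟨P, hPW, hPpos, rfl⟩
    have : P = ⊥ := hzero P hPW (fun x hx hne => Or.inl (hPpos x hx hne).1)
    simp [this]
  · rintro d ⟨P, hPW, hPneg, rfl⟩
    have : P = ⊥ := hzero P hPW (fun x hx hne => Or.inr (hPneg x hx hne).1)
    simp [this]

end SigAux

namespace SigAux
variable {M : Type*} [AddCommGroup M] [Module ℂ M]
variable {B : M →ₗ[ℂ] M →ₛₗ[starRingEnd ℂ] ℂ}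
variable (hherm : ∀ v w, B v w = (starRingEnd ℂ) (B w v))

/-- projection away from `v` -/
noncomputable def projV (B : M →ₗ[ℂ] M →ₛₗ[starRingEnd ℂ] ℂ) (v : M) : M →ₗ[ℂ] M :=
  LinearMap.id - (((B v v)⁻¹ • phiV B v).smulRight v)

variable (B) in
lemma projV_apply (v x : M) : projV B v x = x - ((B v v)⁻¹ * B x v) • v := by
  simp [projV, LinearMap.sub_apply, LinearMap.smulRight_apply, LinearMap.smul_apply,
    smul_eq_mul]

variable (B) in
lemma projV_decomp (v x : M) : x = ((B v v)⁻¹ * B x v) • v + projV B v x := by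
  rw [projV_apply]
  abel

variable (B) in
lemma projV_ortho {v : M} (hvv : B v v ≠ 0) (x : M) : B (projV B v x) v = 0 := by
  rw [projV_apply, map_sub, LinearMap.sub_apply,
    show B (((B v v)⁻¹ * B x v) • v) = ((B v v)⁻¹ * B x v) • B v from B.map_smul _ _,
    LinearMap.smul_apply, smul_eq_mul]
  field_simp
  ring

variable (B) in
lemma projV_mem {W : Submodule ℂ M} {v : M} (hvW : v ∈ W) (hvv : B v v ≠ 0) {x : M}
    (hx : x ∈ W) : projV B v x ∈ W ⊓ LinearMap.ker (phiV B v) := by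
  rw [Submodule.mem_inf, LinearMap.mem_ker]
  constructor
  · rw [projV_apply]
    exact W.sub_mem hx (W.smul_mem _ hvW)
  · rw [phiV_apply]
    exact projV_ortho B hvv x

section FD
variable [FiniteDimensional ℂ M]

variable (B) in
lemma span_sup_ker {W : Submodule ℂ M} {v : M} (hvW : v ∈ W) (hvv : B v v ≠ 0) :
    (ℂ ∙ v) ⊔ (W ⊓ LinearMap.ker (phiV B v)) = W := by
  apply le_antisymm
  · exact sup_le ((Submodule.span_singleton_le_iff_mem v W).2 hvW) inf_le_left
  · intro y hy
    exact Submodule.mem_sup.2 ⟨_, Submodule.mem_span_singleton.2 ⟨_, rfl⟩, _,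
      projV_mem B hvW hvv hy, (projV_decomp B v y).symm⟩

variable (B) in
lemma span_inf_ker {W : Submodule ℂ M} {v : M} (hvv : B v v ≠ 0) :
    (ℂ ∙ v) ⊓ (W ⊓ LinearMap.ker (phiV B v)) = ⊥ := by
  rw [Submodule.eq_bot_iff]
  intro x hx
  obtain ⟨hx1, hx2⟩ := Submodule.mem_inf.1 hx
  obtain ⟨c, rfl⟩ := Submodule.mem_span_singleton.1 hx1
  have hxv : B (c • v) v = 0 := (LinearMap.mem_ker.1 (Submodule.mem_inf.1 hx2).2 :)
  rw [show B (c • v) = c • B v from B.map_smul c v, LinearMap.smul_apply, smul_eq_mul] at hxv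
  rcases mul_eq_zero.1 hxv with rfl | h
  · simp
  · exact absurd h hvv

variable (B) in
lemma rank_split {W : Submodule ℂ M} {v : M} (hvW : v ∈ W) (hvv : B v v ≠ 0) :
    finrank ℂ W = finrank ℂ (W ⊓ LinearMap.ker (phiV B v) : Submodule ℂ M) + 1 := by
  have hvne : v ≠ 0 := by rintro rfl; simp at hvv
  have h := Submodule.finrank_sup_add_finrank_inf_eq (ℂ ∙ v) (W ⊓ LinearMap.ker (phiV B v))
  rw [span_sup_ker B hvW hvv, span_inf_ker B hvv, finrank_bot,
    finrank_span_singleton hvne] at h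
  omega

end FD

include hherm in
lemma projV_self {v : M} (hvv : B v v ≠ 0) (x : M) :
    B (projV B v x) (projV B v x)
      = B x x - (Complex.normSq (B x v) : ℂ) * (B v v)⁻¹ := by
  have hconjd : (starRingEnd ℂ) (B v v) = B v v := (hherm v v).symm
  rw [projV_apply, show (Complex.normSq (B x v) : ℂ)
      = B x v * (starRingEnd ℂ) (B x v) from (Complex.mul_conj _).symm]
  have e1 : B (x - ((B v v)⁻¹ * B x v) • v) = B x - ((B v v)⁻¹ * B x v) • B v := by
    rw [map_sub, B.map_smul]
  rw [e1]
  simp only [LinearMap.sub_apply, LinearMap.smul_apply, map_sub, LinearMap.map_smulₛₗ,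
    smul_eq_mul, map_mul, map_inv₀, hconjd]
  rw [hherm v x]
  field_simp
  ring
end SigAux

namespace SigAux
variable {M : Type*} [AddCommGroup M] [Module ℂ M] [FiniteDimensional ℂ M]
variable {B : M →ₗ[ℂ] M →ₛₗ[starRingEnd ℂ] ℂ}
variable (hherm : ∀ v w, B v w = (starRingEnd ℂ) (B w v))

set_option maxHeartbeats 1000000 in
include hherm in
lemma stepPos {W : Submodule ℂ M} {v : M} (hvW : v ∈ W) (hpos : 0 < (B v v).re)
    (ih : SigTriple B (W ⊓ LinearMap.ker (phiV B v))) : SigTriple B W := by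
  obtain ⟨p', q', hp', hq', hsum'⟩ := ih
  set W' : Submodule ℂ M := W ⊓ LinearMap.ker (phiV B v) with hW'def
  have hdim : (B v v).im = 0 := im_diag hherm v
  have hvv : B v v ≠ 0 := fun h0 => by rw [h0] at hpos; simp at hpos
  have hvne : v ≠ 0 := by rintro rfl; simp at hpos
  have hmemW' : ∀ x : M, x ∈ W' ↔ x ∈ W ∧ B x v = 0 := by
    intro x; simp [hW'def, Submodule.mem_inf, LinearMap.mem_ker]
  have hWle : W' ≤ W := inf_le_left
  have hrankW : finrank ℂ W = finrank ℂ W' + 1 := rank_split B hvW hvv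
  -- IsGreatest pos (p' + 1)
  obtain ⟨P', hP'le, hP'pos, hP'rank⟩ := hp'.1
  have horthPv : ∀ x ∈ P', ∀ y ∈ (ℂ ∙ v), B x y = 0 := by
    intro x hx y hy
    obtain ⟨c, rfl⟩ := Submodule.mem_span_singleton.1 hy
    have hxv : B x v = 0 := ((hmemW' x).1 (hP'le hx)).2
    rw [LinearMap.map_smulₛₗ, hxv, smul_zero]
  have hPpos : ∀ x ∈ P' ⊔ (ℂ ∙ v), x ≠ 0 → 0 < (B x x).re :=
    posdef_sup hherm (fun x hx hne => (hP'pos x hx hne).1) (posdef_span_singleton hpos) horthPv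
  have hPdisj : P' ⊓ (ℂ ∙ v) = ⊥ := by
    rw [Submodule.eq_bot_iff]
    intro x hx
    obtain ⟨hx1, hx2⟩ := Submodule.mem_inf.1 hx
    obtain ⟨c, rfl⟩ := Submodule.mem_span_singleton.1 hx2
    have hxv : B (c • v) v = 0 := ((hmemW' _).1 (hP'le hx1)).2
    rw [show B (c • v) = c • B v from B.map_smul c v, LinearMap.smul_apply, smul_eq_mul] at hxv
    rcases mul_eq_zero.1 hxv with rfl | h
    · simp
    · exact absurd h hvv
  have hPrank : finrank ℂ (P' ⊔ (ℂ ∙ v) : Submodule ℂ M) = p' + 1 := by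
    have h := Submodule.finrank_sup_add_finrank_inf_eq P' (ℂ ∙ v)
    rw [hPdisj, finrank_bot, finrank_span_singleton hvne, hP'rank] at h
    omega
  have hgp : IsGreatest (posDefDims B W) (p' + 1) := by
    constructor
    · exact ⟨P' ⊔ (ℂ ∙ v), sup_le (hP'le.trans hWle)
        ((Submodule.span_singleton_le_iff_mem v W).2 hvW),
        fun x hx hne => ⟨hPpos x hx hne, im_diag hherm x⟩, hPrank⟩
    · rintro d ⟨P, hPW, hPp, rfl⟩
      have hmem : finrank ℂ (P ⊓ W' : Submodule ℂ M) ∈ posDefDims B W' :=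
        ⟨P ⊓ W', inf_le_right,
          fun x hx hne => hPp x (Submodule.mem_inf.1 hx).1 hne, rfl⟩
      have h2 := hp'.2 hmem
      have h4 := Submodule.finrank_sup_add_finrank_inf_eq P W'
      have h3 : finrank ℂ (P ⊔ W' : Submodule ℂ M) ≤ finrank ℂ W :=
        Submodule.finrank_mono (sup_le hPW hWle)
      omega
  -- IsGreatest neg q'
  have hgq : IsGreatest (negDefDims B W) q' := by
    constructor
    · obtain ⟨N', hN'le, hN'neg, hN'rank⟩ := hq'.1
      exact ⟨N', hN'le.trans hWle, hN'neg, hN'rank⟩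
    · rintro d ⟨N, hNW, hNneg, rfl⟩
      have hinv : (B v v)⁻¹ = (((B v v).re)⁻¹ : ℝ) := by
        rw [show (B v v) = ((B v v).re : ℂ) from Complex.ext (by simp) (by simp [hdim])]
        exact (Complex.ofReal_inv _).symm
      have hmapneg : ∀ y ∈ N.map (projV B v), y ≠ 0 → (B y y).re < 0 ∧ (B y y).im = 0 := by
        intro y hy hyne
        obtain ⟨x, hxN, rfl⟩ := Submodule.mem_map.1 hy
        have hxne : x ≠ 0 := by rintro rfl; exact hyne (map_zero _)
        have hneg := (hNneg x hxN hxne).1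
        refine ⟨?_, im_diag hherm _⟩
        rw [projV_self hherm hvv x, hinv, ← Complex.ofReal_mul, Complex.sub_re,
          Complex.ofReal_re]
        have : 0 ≤ Complex.normSq (B x v) * ((B v v).re)⁻¹ :=
          mul_nonneg (Complex.normSq_nonneg _) (inv_nonneg.2 hpos.le)
        linarith
      have hrank : finrank ℂ (N.map (projV B v) : Submodule ℂ M) = finrank ℂ N := by
        have hker : LinearMap.ker ((projV B v) ∘ₗ N.subtype) = ⊥ := by
          rw [Submodule.eq_bot_iff]
          intro x hx
          rw [LinearMap.mem_ker, LinearMap.comp_apply] at hx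
          have hdecomp := projV_decomp B v (x : M)
          rw [Submodule.coe_subtype] at hx
          rw [hx, add_zero] at hdecomp
          by_contra hne
          have hxne : (x : M) ≠ 0 := fun h => hne (Subtype.ext h)
          have hposx : 0 < (B (x : M) (x : M)).re := by
            rw [hdecomp]
            exact posdef_span_singleton hpos _ (Submodule.mem_span_singleton.2 ⟨_, rfl⟩)
              (by rw [← hdecomp]; exact hxne)
          have := (hNneg (x : M) x.2 hxne).1
          linarith
        have h5 := LinearMap.finrank_range_add_finrank_ker ((projV B v) ∘ₗ N.subtype)
        rw [hker, finrank_bot, add_zero, LinearMap.range_comp, Submodule.range_subtype] at h5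
        exact h5
      have hmem : finrank ℂ N ∈ negDefDims B W' := by
        refine ⟨N.map (projV B v), ?_, hmapneg, hrank⟩
        rw [Submodule.map_le_iff_le_comap]
        intro x hx
        exact projV_mem B hvW hvv (hNW hx)
      exact hq'.2 hmem
  -- radical
  have hrad : W ⊓ sesqPerp B W = W' ⊓ sesqPerp B W' := by
    apply le_antisymm
    · intro x hx
      obtain ⟨hx1, hx2⟩ := Submodule.mem_inf.1 hx
      refine Submodule.mem_inf.2 ⟨(hmemW' x).2 ⟨hx1, hx2 v hvW⟩, fun n hn => hx2 n (hWle hn)⟩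
    · intro x hx
      obtain ⟨hx1, hx2⟩ := Submodule.mem_inf.1 hx
      refine Submodule.mem_inf.2 ⟨hWle hx1, fun n hn => ?_⟩
      have hxv : B x v = 0 := ((hmemW' x).1 hx1).2
      rw [projV_decomp B v n, map_add, LinearMap.map_smulₛₗ, hxv, smul_zero, zero_add]
      exact hx2 _ (projV_mem B hvW hvv hn)
  refine ⟨p' + 1, q', hgp, hgq, ?_⟩
  rw [hrad, hrankW]
  omega
end SigAux

namespace SigAux
section Main
variable {M : Type*} [AddCommGroup M] [Module ℂ M] [FiniteDimensional ℂ M]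

lemma sigTriple_all : ∀ (k : ℕ) (B : M →ₗ[ℂ] M →ₛₗ[starRingEnd ℂ] ℂ),
    (∀ v w, B v w = (starRingEnd ℂ) (B w v)) →
    ∀ W : Submodule ℂ M, finrank ℂ W = k → SigTriple B W := by
  intro k
  induction k using Nat.strong_induction_on with
  | _ k ih =>
    intro B hherm W hWk
    by_cases hiso : ∀ v ∈ W, B v v = 0
    · exact sigTriple_of_isotropic W hiso
    · push_neg at hiso
      obtain ⟨v, hvW, hvv⟩ := hiso
      have hdim := im_diag hherm v
      have hre : (B v v).re ≠ 0 := fun h0 => hvv (Complex.ext (by simp [h0]) (by simp [hdim]))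
      have hrk := rank_split B hvW hvv
      have ihW' : SigTriple B (W ⊓ LinearMap.ker (phiV B v)) :=
        ih _ (by omega) B hherm _ rfl
      rcases lt_or_gt_of_ne hre with hneg | hpos
      · have hherm' := hermNeg hherm
        have hker : LinearMap.ker (phiV (-B) v) = LinearMap.ker (phiV B v) := by
          ext x
          simp [LinearMap.mem_ker, LinearMap.neg_apply, neg_eq_zero]
        have hpos' : 0 < ((-B) v v).re := by
          simp only [LinearMap.neg_apply, Complex.neg_re]
          linarith
        have h := stepPos hherm' hvW hpos' (by rw [hker]; exact sigTriple_neg ihW')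
        have h2 := sigTriple_neg h
        rwa [neg_neg] at h2
      · exact stepPos hherm hvW hpos ihW'

variable {B : M →ₗ[ℂ] M →ₛₗ[starRingEnd ℂ] ℂ}

lemma sigTriple_exists (hherm : ∀ v w, B v w = (starRingEnd ℂ) (B w v))
    (W : Submodule ℂ M) : SigTriple B W :=
  sigTriple_all _ B hherm W rfl

lemma posDefDims_lower {W : Submodule ℂ M} {a b : ℕ}
    (ha : a ∈ posDefDims B W) (hb : b ≤ a) : b ∈ posDefDims B W := by
  obtain ⟨P, hPW, hPpos, rfl⟩ := ha
  have bb := Module.finBasis ℂ P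
  have h1 : LinearIndependent ℂ (fun i : Fin (finrank ℂ P) => (bb i : M)) :=
    bb.linearIndependent.map' P.subtype (Submodule.ker_subtype P)
  have h2 : LinearIndependent ℂ (fun i : Fin b => ((bb (Fin.castLE hb i)) : M)) :=
    h1.comp (Fin.castLE hb) (Fin.castLE_injective hb)
  have hspanle : Submodule.span ℂ
      (Set.range fun i : Fin b => ((bb (Fin.castLE hb i)) : M)) ≤ P := by
    rw [Submodule.span_le]
    rintro _ ⟨i, rfl⟩
    exact (bb _).2
  refine ⟨_, hspanle.trans hPW, fun x hx hne => hPpos x (hspanle hx) hne, ?_⟩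
  rw [finrank_span_eq_card h2, Fintype.card_fin]

lemma negDefDims_lower {W : Submodule ℂ M} {a b : ℕ}
    (ha : a ∈ negDefDims B W) (hb : b ≤ a) : b ∈ negDefDims B W := by
  have h := posDefDims_lower (B := -B) (by rw [posDefDims_neg]; exact ha) hb
  rwa [posDefDims_neg] at h

lemma sesqPerp_top (hnd : ∀ v, (∀ w, B v w = 0) → v = 0) :
    sesqPerp B (⊤ : Submodule ℂ M) = ⊥ := by
  rw [Submodule.eq_bot_iff]
  intro x hx
  exact hnd x fun w => hx w trivial

end Main
end SigAux

namespace SigAux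
section RealForm
variable {M : Type*} [AddCommGroup M] [Module ℂ M]
variable {B : M →ₗ[ℂ] M →ₛₗ[starRingEnd ℂ] ℂ}
variable (hherm : ∀ v w, B v w = (starRingEnd ℂ) (B w v))

/-- The real bilinear form `Re B`. -/
noncomputable def Bre (B : M →ₗ[ℂ] M →ₛₗ[starRingEnd ℂ] ℂ) : LinearMap.BilinForm ℝ M :=
  LinearMap.mk₂ ℝ (fun m n => (B m n).re)
    (fun m m' n => by simp)
    (fun c m n => by
      rw [show c • m = (c : ℂ) • m from rfl]
      simp)
    (fun m n n' => by simp)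
    (fun c m n => by
      show (B m (c • n)).re = c • (B m n).re
      rw [show c • n = (c : ℂ) • n from rfl, LinearMap.map_smulₛₗ]
      simp [Complex.mul_re])

@[simp] lemma Bre_apply (m n : M) : Bre B m n = (B m n).re := rfl

include hherm in
lemma Bre_refl : (Bre B).IsRefl := by
  intro x y h
  simp only [Bre_apply] at h ⊢
  rw [hherm y x]
  simpa using h

lemma Bre_nondeg_aux (hnd : ∀ v, (∀ w, B v w = 0) → v = 0) (m : M)
    (hm : ∀ n, Bre B m n = 0) : m = 0 := by
  apply hnd
  intro n
  have h1 := hm n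
  have h2 := hm ((Complex.I : ℂ) • n)
  simp only [Bre_apply] at h1 h2
  rw [LinearMap.map_smulₛₗ] at h2
  simp only [Complex.conj_I, neg_smul, smul_eq_mul, Complex.neg_re, Complex.mul_re,
    Complex.I_re, Complex.I_im] at h2
  have him : (B m n).im = 0 := by
    rw [show ((-Complex.I).im) = -1 by simp] at h2; linarith
  exact Complex.ext (by simpa using h1) (by simpa using him)

include hherm in
lemma Bre_nondeg (hnd : ∀ v, (∀ w, B v w = 0) → v = 0) : (Bre B).Nondegenerate := by
  have hL : (Bre B).SeparatingLeft := by
    intro m hm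
    exact Bre_nondeg_aux hnd m hm
  refine ⟨hL, fun m hm => hL m fun n => ?_⟩
  have := hm n
  simp only [Bre_apply] at this ⊢
  rw [hherm m n]
  simpa using this

include hherm in
lemma restrict_perp (N : Submodule ℂ M) :
    (sesqPerp B N).restrictScalars ℝ = (Bre B).orthogonal (N.restrictScalars ℝ) := by
  ext m
  simp only [Submodule.restrictScalars_mem, LinearMap.BilinForm.mem_orthogonal_iff,
    mem_sesqPerp, LinearMap.BilinForm.IsOrtho, Bre_apply]
  constructor
  · intro h n hn
    have := ortho_symm hherm (h n hn)
    simp [this]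
  · intro h n hn
    have h1 := h n hn
    have h2 := h ((Complex.I : ℂ) • n) (N.smul_mem _ hn)
    rw [map_smul] at h2
    simp only [LinearMap.smul_apply, smul_eq_mul, Complex.mul_re, Complex.I_re, Complex.I_im] at h2
    have hnm : B n m = 0 := Complex.ext (by simpa using h1) (by simp; linarith)
    rw [hherm m n, hnm, map_zero]
end RealForm
end SigAux
namespace SigAux
section Real2
variable {M : Type*} [AddCommGroup M] [Module ℂ M] [FiniteDimensional ℂ M]
variable {B : M →ₗ[ℂ] M →ₛₗ[starRingEnd ℂ] ℂ}
variable (hherm : ∀ v w, B v w = (starRingEnd ℂ) (B w v))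
variable (hnd : ∀ v, (∀ w, B v w = 0) → v = 0)

lemma finrank_restrict (N : Submodule ℂ M) :
    finrank ℝ (N.restrictScalars ℝ) = 2 * finrank ℂ N := by
  have h1 : finrank ℝ (N.restrictScalars ℝ) = finrank ℝ N :=
    ((Submodule.restrictScalarsEquiv ℝ ℂ M N).restrictScalars ℝ).finrank_eq
  rw [h1, finrank_real_of_complex]

include hherm hnd in
lemma perp_finrank (N : Submodule ℂ M) :
    finrank ℂ N + finrank ℂ (sesqPerp B N) = finrank ℂ M := by
  have h := LinearMap.BilinForm.finrank_orthogonal (Bre_nondeg hherm hnd)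
    (N.restrictScalars ℝ)
  rw [← restrict_perp hherm, finrank_restrict, finrank_restrict] at h
  have h2 : finrank ℝ M = 2 * finrank ℂ M := finrank_real_of_complex M
  have h3 : finrank ℂ N ≤ finrank ℂ M := Submodule.finrank_le N
  omega

include hherm hnd in
lemma double_perp (N : Submodule ℂ M) : sesqPerp B (sesqPerp B N) = N := by
  apply Submodule.restrictScalars_injective ℝ ℂ M
  rw [restrict_perp hherm, restrict_perp hherm,
    LinearMap.BilinForm.orthogonal_orthogonal (Bre_nondeg hherm hnd) (Bre_refl hherm)]
end Real2
end SigAux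

namespace SigAux
section Constr
variable {M : Type*} [AddCommGroup M] [Module ℂ M] [FiniteDimensional ℂ M]
variable {B : M →ₗ[ℂ] M →ₛₗ[starRingEnd ℂ] ℂ}
variable (hherm : ∀ v w, B v w = (starRingEnd ℂ) (B w v))
variable (hnd : ∀ v, (∀ w, B v w = 0) → v = 0)

set_option maxHeartbeats 1000000 in
include hherm hnd in
lemma lower_bound (S : Submodule ℂ M) {a b : ℕ}
    (ha : a ∈ posDefDims B S) (hb : b ∈ posDefDims B (sesqPerp B S)) :
    a + b + finrank ℂ (S ⊓ sesqPerp B S : Submodule ℂ M) ∈ posDefDims B ⊤ := by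
  obtain ⟨P, hPS, hPpos, rfl⟩ := ha
  obtain ⟨P', hP'Sp, hP'pos, rfl⟩ := hb
  have hPpos' : ∀ x ∈ P, x ≠ 0 → 0 < (B x x).re := fun x hx hne => (hPpos x hx hne).1
  have hP'pos' : ∀ x ∈ P', x ≠ 0 → 0 < (B x x).re := fun x hx hne => (hP'pos x hx hne).1
  have horth : ∀ p ∈ P, ∀ p' ∈ P', B p p' = 0 := fun p hp p' hp' =>
    ortho_symm hherm (hP'Sp hp' p (hPS hp))
  have hUpos : ∀ x ∈ P ⊔ P', x ≠ 0 → 0 < (B x x).re :=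
    posdef_sup hherm hPpos' hP'pos' horth
  have hUdisj : P ⊓ P' = ⊥ := by
    rw [Submodule.eq_bot_iff]
    intro x hx
    obtain ⟨hx1, hx2⟩ := Submodule.mem_inf.1 hx
    by_contra hne
    have h0 : B x x = 0 := hP'Sp hx2 x (hPS hx1)
    have := hPpos' x hx1 hne
    rw [h0] at this
    simp at this
  have hUrank : finrank ℂ (P ⊔ P' : Submodule ℂ M) = finrank ℂ P + finrank ℂ P' := by
    have h := Submodule.finrank_sup_add_finrank_inf_eq P P'
    rw [hUdisj, finrank_bot] at h
    omega
  have hUWdisj : ∀ x, x ∈ P ⊔ P' → x ∈ sesqPerp B (P ⊔ P') → x = 0 := by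
    intro x hxU hxW
    by_contra hne
    have h0 : B x x = 0 := hxW x hxU
    have := hUpos x hxU hne
    rw [h0] at this
    simp at this
  have hperpW : sesqPerp B (sesqPerp B (P ⊔ P')) = P ⊔ P' := double_perp hherm hnd _
  have hradW : sesqPerp B (P ⊔ P') ⊓ sesqPerp B (sesqPerp B (P ⊔ P')) = ⊥ := by
    rw [hperpW, Submodule.eq_bot_iff]
    intro x hx
    obtain ⟨hx1, hx2⟩ := Submodule.mem_inf.1 hx
    exact hUWdisj x hx2 hx1
  have hRW : S ⊓ sesqPerp B S ≤ sesqPerp B (P ⊔ P') := by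
    intro x hx
    obtain ⟨hxS, hxP⟩ := Submodule.mem_inf.1 hx
    intro n hn
    obtain ⟨p, hp, p', hp', rfl⟩ := Submodule.mem_sup.1 hn
    have h1 : B x p = 0 := hxP p (hPS hp)
    have h2 : B x p' = 0 := ortho_symm hherm (hP'Sp hp' x hxS)
    rw [map_add, h1, h2, add_zero]
  obtain ⟨pW, qW, hpW, hqW, hsumW⟩ := sigTriple_exists hherm (sesqPerp B (P ⊔ P'))
  rw [hradW, finrank_bot, add_zero] at hsumW
  obtain ⟨N, hNW, hNneg, hNrank⟩ := hqW.1
  have hdisjRN : (S ⊓ sesqPerp B S) ⊓ N = ⊥ := by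
    rw [Submodule.eq_bot_iff]
    intro x hx
    obtain ⟨h1, h2⟩ := Submodule.mem_inf.1 hx
    by_contra hne
    obtain ⟨hxS, hxP⟩ := Submodule.mem_inf.1 h1
    have h0 : B x x = 0 := hxP x hxS
    have := (hNneg x h2 hne).1
    rw [h0] at this
    simp at this
  have hrle : finrank ℂ (S ⊓ sesqPerp B S : Submodule ℂ M) ≤ pW := by
    have h := Submodule.finrank_sup_add_finrank_inf_eq (S ⊓ sesqPerp B S) N
    rw [hdisjRN, finrank_bot] at h
    have h2 : finrank ℂ ((S ⊓ sesqPerp B S) ⊔ N : Submodule ℂ M)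
        ≤ finrank ℂ (sesqPerp B (P ⊔ P') : Submodule ℂ M) :=
      Submodule.finrank_mono (sup_le hRW hNW)
    omega
  obtain ⟨Q, hQW, hQpos, hQrank⟩ := posDefDims_lower hpW.1 hrle
  have hQpos' : ∀ x ∈ Q, x ≠ 0 → 0 < (B x x).re := fun x hx hne => (hQpos x hx hne).1
  have horthUQ : ∀ u ∈ P ⊔ P', ∀ q ∈ Q, B u q = 0 := fun u hu q hq =>
    ortho_symm hherm (hQW hq u hu)
  have hTpos := posdef_sup hherm hUpos hQpos' horthUQ
  have hUQdisj : (P ⊔ P') ⊓ Q = ⊥ := by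
    rw [Submodule.eq_bot_iff]
    intro x hx
    obtain ⟨h1, h2⟩ := Submodule.mem_inf.1 hx
    exact hUWdisj x h1 (hQW h2)
  have hTrank : finrank ℂ ((P ⊔ P') ⊔ Q : Submodule ℂ M)
      = finrank ℂ P + finrank ℂ P' + finrank ℂ (S ⊓ sesqPerp B S : Submodule ℂ M) := by
    have h := Submodule.finrank_sup_add_finrank_inf_eq (P ⊔ P') Q
    rw [hUQdisj, finrank_bot] at h
    omega
  exact ⟨(P ⊔ P') ⊔ Q, le_top, fun x hx hne => ⟨hTpos x hx hne, im_diag hherm x⟩, hTrank⟩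

include hherm hnd in
lemma lower_bound_neg (S : Submodule ℂ M) {a b : ℕ}
    (ha : a ∈ negDefDims B S) (hb : b ∈ negDefDims B (sesqPerp B S)) :
    a + b + finrank ℂ (S ⊓ sesqPerp B S : Submodule ℂ M) ∈ negDefDims B ⊤ := by
  have hherm' := hermNeg hherm
  have hnd' : ∀ v : M, (∀ w, (-B) v w = 0) → v = 0 := by
    intro v hv
    exact hnd v fun w => by
      have := hv w
      rwa [LinearMap.neg_apply, LinearMap.neg_apply, neg_eq_zero] at this
  have ha' : a ∈ posDefDims (-B) S := by rw [posDefDims_neg]; exact ha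
  have hb' : b ∈ posDefDims (-B) (sesqPerp (-B) S) := by
    rw [sesqPerp_neg, posDefDims_neg]; exact hb
  have h := lower_bound hherm' hnd' S ha' hb'
  rw [sesqPerp_neg, posDefDims_neg] at h
  exact h

end Constr
end SigAux

/-- Let `⟨·,·⟩` be a nondegenerate Hermitian form on a finite-dimensional complex
vector space `M`, `S` a subspace, `R = S ∩ S^⊥`.  Then `R` is the radical of the
restriction of the form to `S + S^⊥` (so the form descends to a nondegenerate form
on `(S+S^⊥)/R`), `S` and `S^⊥` are orthogonal (giving the orthogonal direct sum
decomposition `(S+S^⊥)/R = S/R ⊕ S^⊥/R`), and the signature `(p, q)` of the form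
on `M` satisfies `p = p(S/R) + p(S^⊥/R) + dim R` and
`q = q(S/R) + q(S^⊥/R) + dim R`. -/
theorem signature_additivity {M : Type*} [AddCommGroup M] [Module ℂ M]
    [FiniteDimensional ℂ M]
    (B : M →ₗ[ℂ] M →ₛₗ[starRingEnd ℂ] ℂ)
    (hherm : ∀ v w, B v w = (starRingEnd ℂ) (B w v))
    (hnd : ∀ v, (∀ w, B v w = 0) → v = 0)
    (S : Submodule ℂ M) (R : Submodule ℂ M) (hR : R = S ⊓ sesqPerp B S)
    (pM qM pS qS pSp qSp : ℕ)
    (hpM : IsGreatest (posDefDims B ⊤) pM)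
    (hqM : IsGreatest (negDefDims B ⊤) qM)
    (hpS : IsGreatest (posDefDims B S) pS)
    (hqS : IsGreatest (negDefDims B S) qS)
    (hpSp : IsGreatest (posDefDims B (sesqPerp B S)) pSp)
    (hqSp : IsGreatest (negDefDims B (sesqPerp B S)) qSp) :
    -- (1) the radical of the restriction of the form to `S + S^⊥` equals `R`,
    (∀ x, (x ∈ S ⊔ sesqPerp B S ∧ ∀ y ∈ S ⊔ sesqPerp B S, B x y = 0) ↔ x ∈ R) ∧
    -- `S` and `S^⊥` are orthogonal, giving the orthogonal decomposition
    (∀ s ∈ S, ∀ s' ∈ sesqPerp B S, B s s' = 0) ∧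
    -- (2) additivity of signatures
    pM = pS + pSp + Module.finrank ℂ R ∧
    qM = qS + qSp + Module.finrank ℂ R := by
  have hperp : sesqPerp B (sesqPerp B S) = S := SigAux.double_perp hherm hnd S
  refine ⟨?_, ?_, ?_, ?_⟩
  · intro x
    constructor
    · rintro ⟨hxsup, hxall⟩
      have hxperp : x ∈ sesqPerp B S := fun n hn => hxall n (Submodule.mem_sup_left hn)
      have hxS : x ∈ S := by
        rw [← hperp]
        exact fun n hn => hxall n (Submodule.mem_sup_right hn)
      rw [hR]
      exact Submodule.mem_inf.2 ⟨hxS, hxperp⟩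
    · intro hx
      rw [hR] at hx
      obtain ⟨hxS, hxP⟩ := Submodule.mem_inf.1 hx
      refine ⟨Submodule.mem_sup_left hxS, ?_⟩
      intro y hy
      obtain ⟨s, hs, t, ht, rfl⟩ := Submodule.mem_sup.1 hy
      have h1 : B x s = 0 := hxP s hs
      have h2 : B x t = 0 := SigAux.ortho_symm hherm (ht x hxS)
      rw [map_add, h1, h2, add_zero]
  · intro s hs s' hs'
    exact SigAux.ortho_symm hherm (hs' s hs)
  all_goals {
    obtain ⟨pt, qt, hgpt, hgqt, hsumt⟩ := SigAux.sigTriple_exists hherm (⊤ : Submodule ℂ M)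
    obtain ⟨ps, qs, hgps, hgqs, hsums⟩ := SigAux.sigTriple_exists hherm S
    obtain ⟨pp, qp, hgpp, hgqp, hsump⟩ := SigAux.sigTriple_exists hherm (sesqPerp B S)
    have e1 : pM = pt := hpM.unique hgpt
    have e2 : qM = qt := hqM.unique hgqt
    have e3 : pS = ps := hpS.unique hgps
    have e4 : qS = qs := hqS.unique hgqs
    have e5 : pSp = pp := hpSp.unique hgpp
    have e6 : qSp = qp := hqSp.unique hgqp
    have htop : (⊤ : Submodule ℂ M) ⊓ sesqPerp B ⊤ = ⊥ := by
      rw [SigAux.sesqPerp_top hnd, inf_bot_eq]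
    rw [htop, finrank_bot, add_zero, finrank_top] at hsumt
    rw [← hR] at hsums
    rw [hperp, inf_comm, ← hR] at hsump
    have hdim := SigAux.perp_finrank hherm hnd S
    have hlowp : pS + pSp + Module.finrank ℂ R ≤ pM := by
      have h := hpM.2 (SigAux.lower_bound hherm hnd S hpS.1 hpSp.1)
      rwa [← hR] at h
    have hlowq : qS + qSp + Module.finrank ℂ R ≤ qM := by
      have h := hqM.2 (SigAux.lower_bound_neg hherm hnd S hqS.1 hqSp.1)
      rwa [← hR] at h
    omega
  }
end

section
/- Let G be a group, H a normal subgroup of index 2, g ∈ G \ H, and (π, V) an irreducible finite-dimensional complex representation of G. Then exactly one of the following holds: (a) the restriction of π to H is irreducible; or (b) V = W ⊕ π(g)W for some irreducible H-subrepresentation W ⊆ V, and the H-representations W and π(g)W (the latter with action h ↦ π(h)|_{π(g)W}, equivalent to the twist of W by conjugation by g) are not isomorphic. -/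
/-- Clifford theory for an index-two normal subgroup: let `H` be a normal
subgroup of index 2 in `G`, `g ∈ G \ H`, and `(π, V)` an irreducible
finite-dimensional complex representation of `G`.  Then exactly one of the
following holds: (a) the restriction of `π` to `H` is irreducible; or (b)
`V = W ⊕ π(g)W` for an irreducible `H`-subrepresentation `W`, and the
`H`-representations `W` and `π(g)W` are not isomorphic. -/
theorem clifford_index_two
    {G V : Type*} [Group G] [AddCommGroup V] [Module ℂ V] [FiniteDimensional ℂ V]
    [Nontrivial V]
    (H : Subgroup G) [H.Normal] (hindex : H.index = 2)
    (g : G) (hg : g ∉ H)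
    (π : G →* (V →ₗ[ℂ] V))
    (hirr : ∀ W : Submodule ℂ V, (∀ x : G, ∀ v ∈ W, π x v ∈ W) → W = ⊥ ∨ W = ⊤) :
    Xor'
      -- (a) the restriction of π to H is irreducible
      (∀ W : Submodule ℂ V, (∀ h ∈ H, ∀ v ∈ W, π h v ∈ W) → W = ⊥ ∨ W = ⊤)
      -- (b) V = W ⊕ π(g)W with W irreducible for H and W ≇ π(g)W as H-representations
      (∃ W : Submodule ℂ V,
        (∀ h ∈ H, ∀ v ∈ W, π h v ∈ W) ∧ W ≠ ⊥ ∧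
        (∀ U : Submodule ℂ V, U ≤ W → (∀ h ∈ H, ∀ v ∈ U, π h v ∈ U) →
          U = ⊥ ∨ U = W) ∧
        IsCompl W (W.map (π g)) ∧
        ¬∃ T : V →ₗ[ℂ] V,
          W.map T = W.map (π g) ∧
          (∀ w ∈ W, T w = 0 → w = 0) ∧
          (∀ h ∈ H, ∀ w ∈ W, T (π h w) = π h (T w))) := by
  classical
  have hone : ∀ v : V, π 1 v = v := by intro v; rw [map_one]; rfl
  have hmulv : ∀ (x y : G) (v : V), π (x * y) v = π x (π y v) := by
    intro x y v; rw [map_mul]; rfl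
  have hginv : ∀ v : V, π g⁻¹ (π g v) = v := by
    intro v; rw [← hmulv, inv_mul_cancel, hone]
  have hgig : ∀ v : V, π g (π g⁻¹ v) = v := by
    intro v; rw [← hmulv, mul_inv_cancel, hone]
  have hgg : g * g ∈ H := Subgroup.mul_self_mem_of_index_two hindex g
  by_cases ha : ∀ W : Submodule ℂ V, (∀ h ∈ H, ∀ v ∈ W, π h v ∈ W) → W = ⊥ ∨ W = ⊤
  · -- case (a)
    left
    refine ⟨ha, ?_⟩
    rintro ⟨W, hWst, hWbot, -, hcompl, -⟩
    rcases ha W hWst with h | h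
    · exact hWbot h
    subst h
    have hmap : (⊤ : Submodule ℂ V).map (π g) = ⊥ :=
      disjoint_top.mp hcompl.disjoint.symm
    obtain ⟨v, hv⟩ := exists_ne (0 : V)
    have hmem : π g v ∈ (⊤ : Submodule ℂ V).map (π g) :=
      Submodule.mem_map_of_mem trivial
    rw [hmap, Submodule.mem_bot] at hmem
    apply hv
    have := congrArg (π g⁻¹) hmem
    rwa [hginv, map_zero] at this
  · -- case (b)
    right
    refine ⟨?_, ha⟩
    push_neg at ha
    obtain ⟨W₀, hst₀, hbot₀, htop₀⟩ := ha
    -- extract a minimal nonzero H-stable submodule of W₀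
    have exmin : ∀ n : ℕ, ∀ U : Submodule ℂ V, Module.finrank ℂ U ≤ n →
        (∀ h ∈ H, ∀ v ∈ U, π h v ∈ U) → U ≠ ⊥ →
        ∃ W : Submodule ℂ V, W ≤ U ∧ (∀ h ∈ H, ∀ v ∈ W, π h v ∈ W) ∧ W ≠ ⊥ ∧
          ∀ U' : Submodule ℂ V, U' ≤ W → (∀ h ∈ H, ∀ v ∈ U', π h v ∈ U') →
            U' = ⊥ ∨ U' = W := by
      intro n
      induction n with
      | zero =>
        intro U hle hst hne
        exact absurd (Submodule.finrank_eq_zero.mp (Nat.le_zero.mp hle)) hne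
      | succ n ih =>
        intro U hle hst hne
        by_cases hmin : ∀ U' : Submodule ℂ V, U' ≤ U →
            (∀ h ∈ H, ∀ v ∈ U', π h v ∈ U') → U' = ⊥ ∨ U' = U
        · exact ⟨U, le_rfl, hst, hne, hmin⟩
        · push_neg at hmin
          obtain ⟨U', hle', hst', hne', hneU⟩ := hmin
          have hlt : Module.finrank ℂ U' < Module.finrank ℂ U :=
            Submodule.finrank_lt_finrank_of_lt (lt_of_le_of_ne hle' hneU)
          obtain ⟨W, hWU, h1, h2, h3⟩ := ih U' (by omega) hst' hne'
          exact ⟨W, hWU.trans hle', h1, h2, h3⟩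
    obtain ⟨W, hWle, hWst, hWbot, hWmin⟩ :=
      exmin (Module.finrank ℂ W₀) W₀ le_rfl hst₀ hbot₀
    have hWtop : W ≠ ⊤ := by
      intro h
      exact htop₀ (top_le_iff.mp (h ▸ hWle))
    set W' := W.map (π g) with hW'def
    -- W' is H-stable
    have hconj : ∀ h ∈ H, g⁻¹ * h * g ∈ H := by
      intro h hh
      have := Subgroup.Normal.conj_mem ‹H.Normal› h hh g⁻¹
      simpa using this
    have hW'st : ∀ h ∈ H, ∀ v ∈ W', π h v ∈ W' := by
      intro h hh v hv
      obtain ⟨u, hu, rfl⟩ := Submodule.mem_map.mp hv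
      have keyg : h * g = g * (g⁻¹ * h * g) := by group
      have : π h (π g u) = π g (π (g⁻¹ * h * g) u) := by
        rw [← hmulv, ← hmulv, keyg]
      rw [this]
      exact Submodule.mem_map_of_mem (hWst _ (hconj h hh) u hu)
    -- W ⊔ W' = ⊤
    have hsup : W ⊔ W' = ⊤ := by
      have hstG : ∀ x : G, ∀ v ∈ W ⊔ W', π x v ∈ W ⊔ W' := by
        intro x v hv
        rcases Submodule.mem_sup.mp hv with ⟨w, hw, w', hw', rfl⟩
        rw [map_add]
        by_cases hx : x ∈ H
        · exact Submodule.add_mem _ (Submodule.mem_sup_left (hWst x hx w hw))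
            (Submodule.mem_sup_right (hW'st x hx w' hw'))
        · have hgx : g⁻¹ * x ∈ H := by
            rw [Subgroup.mul_mem_iff_of_index_two hindex]
            constructor
            · intro h; exact absurd ((Subgroup.inv_mem_iff H).mp h) hg
            · intro h; exact absurd h hx
          have h1 : π x w ∈ W' := by
            have hx1 : x = g * (g⁻¹ * x) := by group
            have : π x w = π g (π (g⁻¹ * x) w) := by rw [← hmulv, ← hx1]
            rw [this]
            exact Submodule.mem_map_of_mem (hWst _ hgx w hw)
          have h2 : π x w' ∈ W := by
            obtain ⟨u, hu, rfl⟩ := Submodule.mem_map.mp hw'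
            have hxg : x * g ∈ H := by
              rw [Subgroup.mul_mem_iff_of_index_two hindex]
              constructor
              · intro h; exact absurd h hx
              · intro h; exact absurd h hg
            rw [← hmulv]
            exact hWst _ hxg u hu
          exact Submodule.add_mem _ (Submodule.mem_sup_right h1)
            (Submodule.mem_sup_left h2)
      rcases hirr (W ⊔ W') hstG with h | h
      · exact absurd (le_bot_iff.mp (h ▸ le_sup_left)) hWbot
      · exact h
    -- finrank of W' equals finrank of W
    have hcomp1 : (π g) ∘ₗ (π g⁻¹) = LinearMap.id := LinearMap.ext hgig
    have hcomp2 : (π g⁻¹) ∘ₗ (π g) = LinearMap.id := LinearMap.ext hginv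
    have hfr : Module.finrank ℂ W' = Module.finrank ℂ W := by
      have := LinearEquiv.finrank_map_eq
        (LinearEquiv.ofLinear (π g) (π g⁻¹) hcomp1 hcomp2) W
      exact this
    -- W ⊓ W' = ⊥
    have hinf : W ⊓ W' = ⊥ := by
      have hstInf : ∀ h ∈ H, ∀ v ∈ W ⊓ W', π h v ∈ W ⊓ W' := by
        intro h hh v hv
        exact ⟨hWst h hh v hv.1, hW'st h hh v hv.2⟩
      rcases hWmin (W ⊓ W') inf_le_left hstInf with h | h
      · exact h
      · exfalso
        have hle : W ≤ W' := h ▸ inf_le_right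
        have heq : W = W' := Submodule.eq_of_le_of_finrank_le hle (le_of_eq hfr)
        have hstG : ∀ x : G, ∀ v ∈ W, π x v ∈ W := by
          intro x v hv
          by_cases hx : x ∈ H
          · exact hWst x hx v hv
          · have hxg : x * g⁻¹ ∈ H := by
              rw [Subgroup.mul_mem_iff_of_index_two hindex]
              constructor
              · intro h'; exact absurd h' hx
              · intro h'; exact absurd ((Subgroup.inv_mem_iff H).mp h') hg
            have hx1 : x = (x * g⁻¹) * g := by group
            have hstep : π x v = π (x * g⁻¹) (π g v) := by rw [← hmulv, ← hx1]
            rw [hstep]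
            have hgv : π g v ∈ W := by
              rw [heq]; exact Submodule.mem_map_of_mem hv
            exact hWst _ hxg _ hgv
        rcases hirr W hstG with h' | h'
        · exact hWbot h'
        · exact hWtop h'
    have hcompl : IsCompl W W' := ⟨disjoint_iff.mpr hinf, codisjoint_iff.mpr hsup⟩
    refine ⟨W, hWst, hWbot, hWmin, hcompl, ?_⟩
    -- no H-isomorphism between W and W'
    rintro ⟨T, hTmap, hTinj, hTcomm⟩
    set P : V →ₗ[ℂ] W := Submodule.projectionOnto W W' hcompl with hPdef
    set P' : V →ₗ[ℂ] W' := Submodule.projectionOnto W' W hcompl.symm with hP'def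
    set S : V →ₗ[ℂ] V :=
      T ∘ₗ (W.subtype ∘ₗ P) + ((π g) ∘ₗ T ∘ₗ (π g⁻¹)) ∘ₗ (W'.subtype ∘ₗ P')
      with hSdef
    have hSval : ∀ w ∈ W, ∀ w' ∈ W', S (w + w') = T w + π g (T (π g⁻¹ w')) := by
      intro w hw w' hw'
      have e1 : P (w + w') = ⟨w, hw⟩ := by
        rw [map_add, Submodule.projectionOnto_apply_of_mem_right hcompl hw',
          add_zero]
        exact Submodule.projectionOnto_apply_left hcompl ⟨w, hw⟩
      have e2 : P' (w + w') = ⟨w', hw'⟩ := by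
        rw [map_add, Submodule.projectionOnto_apply_of_mem_right hcompl.symm hw,
          zero_add]
        exact Submodule.projectionOnto_apply_left hcompl.symm ⟨w', hw'⟩
      simp only [hSdef, LinearMap.add_apply, LinearMap.comp_apply, e1, e2,
        Submodule.subtype_apply]
    -- decomposition of an arbitrary vector
    have hdec : ∀ v : V, ∃ w ∈ W, ∃ u ∈ W, v = w + π g u := by
      intro v
      have hv : v ∈ W ⊔ W' := by rw [hsup]; trivial
      rcases Submodule.mem_sup.mp hv with ⟨w, hw, w', hw', rfl⟩
      obtain ⟨u, hu, rfl⟩ := Submodule.mem_map.mp hw'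
      exact ⟨w, hw, u, hu, rfl⟩
    -- S commutes with π h for h ∈ H
    have hScommH : ∀ h ∈ H, ∀ v : V, S (π h v) = π h (S v) := by
      intro h hh v
      obtain ⟨w, hw, u, hu, rfl⟩ := hdec v
      have hh' : g⁻¹ * h * g ∈ H := hconj h hh
      have keyg : h * g = g * (g⁻¹ * h * g) := by group
      have key1 : π h (π g u) = π g (π (g⁻¹ * h * g) u) := by
        rw [← hmulv, ← hmulv, keyg]
      have lhs : π h (w + π g u) = π h w + π g (π (g⁻¹ * h * g) u) := by
        rw [map_add, key1]
      rw [lhs,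
        hSval _ (hWst h hh w hw) _ (Submodule.mem_map_of_mem (hWst _ hh' u hu)),
        hSval _ hw _ (Submodule.mem_map_of_mem hu), hginv, hginv,
        hTcomm h hh w hw, hTcomm _ hh' u hu, map_add]
      congr 1
      rw [← hmulv, ← hmulv, keyg]
    -- S commutes with π g
    have hScommg : ∀ v : V, S (π g v) = π g (S v) := by
      intro v
      obtain ⟨w, hw, u, hu, rfl⟩ := hdec v
      have key : π g (π g u) = π (g * g) u := (hmulv g g u).symm
      have harg : π g (w + π g u) = π (g * g) u + π g w := by
        rw [map_add, key, add_comm]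
      rw [harg, hSval _ (hWst _ hgg u hu) _ (Submodule.mem_map_of_mem hw),
        hSval _ hw _ (Submodule.mem_map_of_mem hu), hginv, hginv,
        hTcomm _ hgg u hu, map_add, hmulv]
      exact add_comm _ _
    -- S commutes with all π x
    have hScomm : ∀ x : G, ∀ v : V, S (π x v) = π x (S v) := by
      intro x v
      by_cases hx : x ∈ H
      · exact hScommH x hx v
      · have hxg : x * g⁻¹ ∈ H := by
          rw [Subgroup.mul_mem_iff_of_index_two hindex]
          constructor
          · intro h'; exact absurd h' hx
          · intro h'; exact absurd ((Subgroup.inv_mem_iff H).mp h') hg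
        have hx2 : x * g⁻¹ * g = x := by group
        calc S (π x v) = S (π (x * g⁻¹) (π g v)) := by rw [← hmulv, hx2]
          _ = π (x * g⁻¹) (S (π g v)) := hScommH _ hxg _
          _ = π (x * g⁻¹) (π g (S v)) := by rw [hScommg]
          _ = π x (S v) := by rw [← hmulv, hx2]
    -- Schur: S is a scalar
    obtain ⟨c, hc⟩ := Module.End.exists_eigenvalue (S : Module.End ℂ V)
    obtain ⟨v₀, hv₀⟩ := hc.exists_hasEigenvector
    have hEtop : Module.End.eigenspace (S : Module.End ℂ V) c = ⊤ := by
      have hstE : ∀ x : G, ∀ v ∈ Module.End.eigenspace (S : Module.End ℂ V) c,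
          π x v ∈ Module.End.eigenspace (S : Module.End ℂ V) c := by
        intro x v hv
        rw [Module.End.mem_eigenspace_iff] at hv ⊢
        rw [hScomm x v, hv, map_smul]
      rcases hirr _ hstE with h | h
      · exact absurd h (Submodule.ne_bot_iff _ |>.mpr ⟨v₀, hv₀.1, hv₀.2⟩)
      · exact h
    have hscal : ∀ v : V, S v = c • v := by
      intro v
      have : v ∈ Module.End.eigenspace (S : Module.End ℂ V) c := by
        rw [hEtop]; trivial
      exact Module.End.mem_eigenspace_iff.mp this
    -- contradiction
    obtain ⟨w, hw, hwne⟩ := Submodule.exists_mem_ne_zero_of_ne_bot hWbot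
    have hSw : S w = T w := by
      have := hSval w hw 0 (Submodule.zero_mem _)
      simpa using this
    have hTw : T w = c • w := by rw [← hSw]; exact hscal w
    have hTwW' : T w ∈ W' := by
      rw [hW'def, ← hTmap]; exact Submodule.mem_map_of_mem hw
    have hTwW : T w ∈ W := by
      rw [hTw]; exact Submodule.smul_mem W c hw
    have hTw0 : T w = 0 := by
      have : T w ∈ W ⊓ W' := ⟨hTwW, hTwW'⟩
      rwa [hinf, Submodule.mem_bot] at this
    exact hwne (hTinj w hw hTw0)
end
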